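/- Unconditional exclusion property (acyclicity of the free shelf): for all terms T, T' in FreeMagma Unit, the relations T ≡LD T' and T ⊏*LD T' cannot both hold; in particular T ⊏*LD T never holds, i.e., the free left shelf on one generator is acyclic. -/

import Mathlib

/-!
Dehornoy's braid argument, with Larue's proof that `σ₁`-positive braids are nontrivial, run
directly in `Aut F` for the free group `F` on `x₀, x₁, …`. Let `shift e` fix `x₀` and act as `e`
on `x₁, x₂, …` (indices shifted by one), and let `σ` be Artin's automorphism
`x₀ ↦ x₀x₁x₀⁻¹, x₁ ↦ x₀`. As `σ` satisfies the braid relation with `shift σ` and commutes with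
the image of `shift²`, `a ◃ b = a · shift b · σ · (shift a)⁻¹` is left self-distributive, so
evaluating terms at `x ↦ 1` respects `≡LD`, and `T ⊏LD T'` gives
`eval T' = eval T · shift u · σ · shift v`. Such products are nontrivial: `shift u` preserves the
leading letter `x₀^{±1}` of a reduced word (it preserves normal forms in `⟨x₀⟩ ∗ ⟨x₁, x₂, …⟩`),
and `σ` turns a leading `x₀^{±1}` into a leading `x₀`, so they move `x₀⁻¹`.
-/

/-- LD-equivalence: the smallest congruence on `FreeMagma X` containing all pairs
`(T₁ ◃ (T₂ ◃ T₃), (T₁ ◃ T₂) ◃ (T₁ ◃ T₃))`. -/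
inductive LDEquiv {X : Type*} : FreeMagma X → FreeMagma X → Prop
  | ld (a b c : FreeMagma X) : LDEquiv (a * (b * c)) ((a * b) * (a * c))
  | refl (a : FreeMagma X) : LDEquiv a a
  | symm {a b : FreeMagma X} : LDEquiv a b → LDEquiv b a
  | trans {a b c : FreeMagma X} : LDEquiv a b → LDEquiv b c → LDEquiv a c
  | mul_left {a b : FreeMagma X} (c : FreeMagma X) : LDEquiv a b → LDEquiv (c * a) (c * b)
  | mul_right {a b : FreeMagma X} (c : FreeMagma X) : LDEquiv a b → LDEquiv (a * c) (b * c)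

/-- LD-division on terms: `T ⊏LD T'` iff `T ◃ T₁ ≡LD T'` for some term `T₁`. -/
def LDDiv {X : Type*} (T T' : FreeMagma X) : Prop :=
  ∃ T₁ : FreeMagma X, LDEquiv (T * T₁) T'

namespace FreeGroup

variable {α β : Type*}

def avoiding (a : α) : Subgroup (FreeGroup α) :=
  Subgroup.closure (of '' {a}ᶜ)

theorem of_mem_avoiding {a i : α} (h : i ≠ a) : of i ∈ avoiding a :=
  Subgroup.subset_closure ⟨i, h, rfl⟩

theorem mk_mem_avoiding {a : α} :
    ∀ {w : List (α × Bool)}, (∀ l ∈ w, l.1 ≠ a) → mk w ∈ avoiding a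
  | [], _ => (avoiding a).one_mem
  | (i, b) :: w, hw => by
    rw [← List.singleton_append, ← mul_mk]
    refine mul_mem ?_ (mk_mem_avoiding fun l hl => hw l (List.mem_cons_of_mem _ hl))
    have hi : of i ∈ avoiding a := of_mem_avoiding (hw _ List.mem_cons_self)
    cases b
    · exact inv_mem hi
    · exact hi

theorem map_avoiding_le {π : FreeGroup α →* FreeGroup β} {a : α} {c : β}
    (h : ∀ i ≠ a, π (of i) ∈ avoiding c) : (avoiding a).map π ≤ avoiding c := by
  rw [avoiding, MonoidHom.map_closure, Subgroup.closure_le]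
  rintro _ ⟨_, ⟨i, hi, rfl⟩, rfl⟩
  exact h i hi

theorem map_mk_singleton {π : FreeGroup α →* FreeGroup β} {a : α} {c : β}
    (h : π (of a) = of c) (b : Bool) : π (mk [(a, b)]) = mk [(c, b)] := by
  cases b
  · change π (of a)⁻¹ = (of c)⁻¹
    rw [_root_.map_inv, h]
  · exact h

/-- Normal forms in `FreeGroup α = ⟨of a⟩ ∗ avoiding a`: products
`x^{e₁} h₁ x^{e₂} h₂ ⋯ x^{eₙ} hₙ` with `x = of a`, `eᵢ ≠ 0`, `hᵢ ∈ avoiding a` and `hᵢ ≠ 1`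
for `i < n`, where `b` is the sign of `e₁`. -/
inductive SyllableProd (a : α) : Bool → FreeGroup α → Prop
  | single (b : Bool) {h : FreeGroup α} : h ∈ avoiding a → SyllableProd a b (mk [(a, b)] * h)
  | cons (b : Bool) {g : FreeGroup α} : SyllableProd a b g → SyllableProd a b (mk [(a, b)] * g)
  | cons_avoiding (b : Bool) {c : Bool} {h g : FreeGroup α} : h ∈ avoiding a → h ≠ 1 →
      SyllableProd a c g → SyllableProd a b (mk [(a, b)] * (h * g))

namespace SyllableProd

variable {a : α} {b : Bool} {f : FreeGroup α}

theorem map {π : FreeGroup α →* FreeGroup β} (hπ : Function.Injective π) {c : β}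
    (hπa : π (of a) = of c) (hπH : ∀ i ≠ a, π (of i) ∈ avoiding c)
    (hf : SyllableProd a b f) : SyllableProd c b (π f) := by
  have hmem {h : FreeGroup α} (hh : h ∈ avoiding a) : π h ∈ avoiding c :=
    map_avoiding_le hπH (Subgroup.mem_map_of_mem π hh)
  induction hf with
  | single b hh =>
    rw [_root_.map_mul, map_mk_singleton hπa]
    exact .single b (hmem hh)
  | cons b _ ih =>
    rw [_root_.map_mul, map_mk_singleton hπa]
    exact .cons b ih
  | cons_avoiding b hh hh1 _ ih =>
    rw [_root_.map_mul, _root_.map_mul, map_mk_singleton hπa]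
    exact .cons_avoiding b (hmem hh) ((map_ne_one_iff π hπ).2 hh1) ih

theorem mul_avoiding (hf : SyllableProd a b f) {h : FreeGroup α} (hh : h ∈ avoiding a) :
    SyllableProd a b (f * h) := by
  induction hf with
  | single b hh' =>
    rw [mul_assoc]
    exact .single b (mul_mem hh' hh)
  | cons b _ ih =>
    rw [mul_assoc]
    exact .cons b ih
  | cons_avoiding b hh' hh1 _ ih =>
    rw [mul_assoc, mul_assoc]
    exact .cons_avoiding b hh' hh1 ih

end SyllableProd

variable [DecidableEq α] [DecidableEq β]

theorem mem_avoiding_iff {a : α} {x : FreeGroup α} :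
    x ∈ avoiding a ↔ ∀ l ∈ x.toWord, l.1 ≠ a := by
  refine ⟨fun hx => ?_, fun hx => mk_toWord (x := x) ▸ mk_mem_avoiding hx⟩
  induction hx using Subgroup.closure_induction with
  | mem _ hy =>
    obtain ⟨i, hi, rfl⟩ := hy
    simpa using hi
  | one => simp
  | mul y z _ _ hy hz =>
    intro l hl
    rcases List.mem_append.1 ((toWord_mul_sublist y z).mem hl) with h | h
    exacts [hy l h, hz l h]
  | inv y _ hy =>
    intro l hl
    obtain ⟨m, hm, rfl⟩ := List.mem_map.1 (List.mem_reverse.1 (toWord_inv y ▸ hl))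
    exact hy m hm

theorem toWord_mul_of_isReduced {x y : FreeGroup α} (h : IsReduced (x.toWord ++ y.toWord)) :
    (x * y).toWord = x.toWord ++ y.toWord := by
  rw [toWord_mul, h.reduce_eq]

theorem toWord_mk_singleton_mul {l : α × Bool} {x : FreeGroup α}
    (h : ∀ y ∈ x.toWord.head?, l.1 = y.1 → l.2 = y.2) :
    (mk [l] * x).toWord = l :: x.toWord := by
  rw [← mk_toWord (x := x), mul_mk, toWord_mk, mk_toWord]
  exact IsReduced.reduce_eq (List.isChain_cons.2 ⟨h, isReduced_toWord⟩)

theorem SyllableProd.head_toWord {a : α} {b : Bool} {f : FreeGroup α} (hf : SyllableProd a b f) :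
    f.toWord.head? = some (a, b) := by
  induction hf with
  | single b hh =>
    rw [toWord_mk_singleton_mul]
    · rfl
    · intro y hy hya
      exact absurd hya.symm (mem_avoiding_iff.1 hh y (List.mem_of_mem_head? hy))
  | cons b _ ih =>
    rw [toWord_mk_singleton_mul]
    · rfl
    · simp [ih]
  | @cons_avoiding b c h g hh hh1 _ ih =>
    have hword := mem_avoiding_iff.1 hh
    obtain ⟨l, w, hlw⟩ := List.exists_cons_of_ne_nil (mt toWord_eq_nil_iff.1 hh1)
    have hhg : (h * g).toWord = h.toWord ++ g.toWord := by
      refine toWord_mul_of_isReduced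
        (List.isChain_append.2 ⟨isReduced_toWord, isReduced_toWord, ?_⟩)
      intro x hx y hy hxy
      rw [ih, Option.mem_some_iff] at hy
      subst hy
      exact absurd hxy (hword x (List.mem_of_mem_getLast? hx))
    rw [toWord_mk_singleton_mul]
    · rfl
    · intro y hy hya
      rw [hhg, hlw, List.cons_append, List.head?_cons, Option.mem_some_iff] at hy
      subst hy
      exact absurd hya.symm (hword _ (hlw ▸ List.mem_cons_self))

theorem syllableProd_mk_cons {a : α} {b : Bool} {w : List (α × Bool)}
    (hw : IsReduced ((a, b) :: w)) : SyllableProd a b (mk ((a, b) :: w)) := by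
  rw [← List.singleton_append, ← mul_mk]
  cases hfind : w.find? (fun l => l.1 = a) with
  | none =>
    refine .single b (mk_mem_avoiding fun l hl => ?_)
    simpa using List.find?_eq_none.1 hfind l hl
  | some l =>
    obtain ⟨hla, u, r, hwur, hu⟩ := List.find?_eq_some_iff_append.1 hfind
    have hlen : r.length < w.length := by simp [hwur]; omega
    subst hwur
    obtain ⟨a', c⟩ := l
    simp only [decide_eq_true_eq] at hla
    subst a'
    have hr : IsReduced ((a, c) :: r) :=
      hw.suffix ((List.suffix_append _ _).trans (List.suffix_cons _ _))
    have ih : SyllableProd a c (mk ((a, c) :: r)) := syllableProd_mk_cons hr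
    rw [← mul_mk]
    rcases u with _ | ⟨l, u⟩
    · obtain rfl : c = b := (List.isChain_cons_cons.1 hw).1 rfl |>.symm
      exact .cons c (by simpa using ih)
    · have hu' : ∀ l' ∈ l :: u, l'.1 ≠ a := fun l' hl' => by simpa using hu l' hl'
      refine .cons_avoiding b (mk_mem_avoiding hu') ?_ ih
      rw [Ne, ← toWord_eq_nil_iff, toWord_mk,
        IsReduced.reduce_eq (hw.infix ⟨[(a, b)], (a, c) :: r, rfl⟩)]
      exact List.cons_ne_nil _ _
termination_by w.length

theorem syllableProd_iff_head_toWord {a : α} {b : Bool} {f : FreeGroup α} :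
    SyllableProd a b f ↔ f.toWord.head? = some (a, b) := by
  refine ⟨SyllableProd.head_toWord, fun hf => ?_⟩
  obtain ⟨w, hw⟩ := List.head?_eq_some_iff.1 hf
  rw [← mk_toWord (x := f), hw]
  exact syllableProd_mk_cons (hw ▸ isReduced_toWord)

theorem head_toWord_map {π : FreeGroup α →* FreeGroup β} (hπ : Function.Injective π) {a : α}
    {c : β} (hπa : π (of a) = of c) (hπH : ∀ i ≠ a, π (of i) ∈ avoiding c) {b : Bool}
    {f : FreeGroup α} (hf : f.toWord.head? = some (a, b)) : (π f).toWord.head? = some (c, b) :=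
  syllableProd_iff_head_toWord.1 <| (syllableProd_iff_head_toWord.2 hf).map hπ hπa hπH

theorem head_toWord_mul_avoiding {a : α} {b : Bool} {f h : FreeGroup α}
    (hf : f.toWord.head? = some (a, b)) (hh : h ∈ avoiding a) :
    (f * h).toWord.head? = some (a, b) :=
  syllableProd_iff_head_toWord.1 <| (syllableProd_iff_head_toWord.2 hf).mul_avoiding hh

end FreeGroup

section ShiftConj

variable {G : Type*} [Group G] (s : G →* G) (σ : G)

def shiftConj (a b : G) : G := a * s b * σ * (s a)⁻¹

variable {s σ} in
theorem shiftConj_self_distrib (hbraid : σ * s σ * σ = s σ * σ * s σ)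
    (hcomm : ∀ g, Commute σ (s (s g))) (a b c : G) :
    shiftConj s σ a (shiftConj s σ b c) =
      shiftConj s σ (shiftConj s σ a b) (shiftConj s σ a c) := by
  symm
  calc shiftConj s σ (shiftConj s σ a b) (shiftConj s σ a c)
      = a * s b * (σ * s (s c)) * s σ * ((s (s a))⁻¹ * σ * s (s a)) * (s σ)⁻¹ *
          (s (s b))⁻¹ * (s a)⁻¹ := by
        simp only [shiftConj, map_mul, map_inv]
        group
    _ = a * s b * s (s c) * (σ * s σ * σ) * (s σ)⁻¹ * (s (s b))⁻¹ * (s a)⁻¹ := by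
        rw [(hcomm c).eq, ← ((hcomm a).inv_right).eq]
        group
    _ = a * s b * s (s c) * s σ * (σ * (s (s b))⁻¹) * (s a)⁻¹ := by
        rw [hbraid]
        group
    _ = shiftConj s σ a (shiftConj s σ b c) := by
        rw [((hcomm b).inv_right).eq]
        simp only [shiftConj, map_mul, map_inv]
        group

end ShiftConj

open FreeGroup

namespace Artin

def shiftEnd (φ : FreeGroup ℕ →* FreeGroup ℕ) : FreeGroup ℕ →* FreeGroup ℕ :=
  lift fun
    | 0 => of 0
    | j + 1 => map Nat.succ (φ (of j))

@[simp]
theorem shiftEnd_of_zero (φ : FreeGroup ℕ →* FreeGroup ℕ) : shiftEnd φ (of 0) = of 0 := by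
  simp [shiftEnd]

@[simp] theorem shiftEnd_of_succ (φ : FreeGroup ℕ →* FreeGroup ℕ) (j : ℕ) :
    shiftEnd φ (of (j + 1)) = map Nat.succ (φ (of j)) := by
  simp [shiftEnd]

theorem shiftEnd_comp_map_succ (φ : FreeGroup ℕ →* FreeGroup ℕ) :
    (shiftEnd φ).comp (map Nat.succ) = (map Nat.succ).comp φ :=
  ext_hom _ _ fun j => by simp

theorem shiftEnd_id : shiftEnd (MonoidHom.id _) = MonoidHom.id _ :=
  ext_hom _ _ fun j => by cases j <;> simp

theorem shiftEnd_comp (φ ψ : FreeGroup ℕ →* FreeGroup ℕ) :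
    shiftEnd (φ.comp ψ) = (shiftEnd φ).comp (shiftEnd ψ) :=
  ext_hom _ _ fun j => by
    cases j
    · simp
    · simp [← MonoidHom.comp_apply (shiftEnd φ), shiftEnd_comp_map_succ]

def shift : MulAut (FreeGroup ℕ) →* MulAut (FreeGroup ℕ) where
  toFun e := (shiftEnd e).toMulEquiv (shiftEnd e.symm)
    (by rw [← shiftEnd_comp, MulEquiv.coe_monoidHom_symm_comp_coe_monoidHom, shiftEnd_id])
    (by rw [← shiftEnd_comp, MulEquiv.coe_monoidHom_comp_coe_monoidHom_symm, shiftEnd_id])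
  map_one' := MulEquiv.ext fun x => by
    simp [show ((1 : MulAut (FreeGroup ℕ)) : FreeGroup ℕ →* FreeGroup ℕ) = MonoidHom.id _
      from rfl, shiftEnd_id]
  map_mul' e₁ e₂ := MulEquiv.ext fun x => by
    simp [show ((e₁ * e₂ : MulAut (FreeGroup ℕ)) : FreeGroup ℕ →* FreeGroup ℕ) =
      (e₁ : FreeGroup ℕ →* FreeGroup ℕ).comp e₂ from rfl, shiftEnd_comp]

theorem shift_apply (e : MulAut (FreeGroup ℕ)) (x : FreeGroup ℕ) : shift e x = shiftEnd e x :=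
  rfl

def artinEnd (i : ℕ) : FreeGroup ℕ →* FreeGroup ℕ :=
  lift fun j => if j = i then of i * of (i + 1) * (of i)⁻¹ else if j = i + 1 then of i else of j

def artinInvEnd (i : ℕ) : FreeGroup ℕ →* FreeGroup ℕ :=
  lift fun j =>
    if j = i then of (i + 1) else if j = i + 1 then (of (i + 1))⁻¹ * of i * of (i + 1) else of j

theorem artinEnd_of (i j : ℕ) : artinEnd i (of j) =
    if j = i then of i * of (i + 1) * (of i)⁻¹ else if j = i + 1 then of i else of j := by
  simp [artinEnd]

theorem artinInvEnd_of (i j : ℕ) : artinInvEnd i (of j) =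
    if j = i then of (i + 1)
    else if j = i + 1 then (of (i + 1))⁻¹ * of i * of (i + 1) else of j := by
  simp [artinInvEnd]

def artin (i : ℕ) : MulAut (FreeGroup ℕ) :=
  (artinEnd i).toMulEquiv (artinInvEnd i)
    (ext_hom _ _ fun j => by
      rcases eq_or_ne j i with rfl | h
      · simp [artinEnd_of, artinInvEnd_of]
        group
      rcases eq_or_ne j (i + 1) with rfl | h'
      · simp [artinEnd_of, artinInvEnd_of]
      · simp [artinEnd_of, artinInvEnd_of, h, h'])
    (ext_hom _ _ fun j => by
      rcases eq_or_ne j i with rfl | h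
      · simp [artinEnd_of, artinInvEnd_of]
      rcases eq_or_ne j (i + 1) with rfl | h'
      · simp [artinEnd_of, artinInvEnd_of]
        group
      · simp [artinEnd_of, artinInvEnd_of, h, h'])

theorem artin_apply (i : ℕ) (x : FreeGroup ℕ) : artin i x = artinEnd i x := rfl

theorem shift_artin (i : ℕ) : shift (artin i) = artin (i + 1) := by
  refine MulEquiv.toMonoidHom_injective (ext_hom _ _ fun j => ?_)
  simp only [MulEquiv.coe_toMonoidHom, shift_apply, artin_apply]
  rcases j with _ | k
  · simp [artinEnd_of]
  · rcases eq_or_ne k i with rfl | h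
    · simp +arith [artin_apply, artinEnd_of]
    rcases eq_or_ne k (i + 1) with rfl | h'
    · simp +arith [artin_apply, artinEnd_of]
    · simp +arith [artin_apply, artinEnd_of, h, h']

theorem artin_braid (i : ℕ) :
    artin i * artin (i + 1) * artin i = artin (i + 1) * artin i * artin (i + 1) := by
  refine MulEquiv.toMonoidHom_injective (ext_hom _ _ fun j => ?_)
  simp only [MulEquiv.coe_toMonoidHom, MulAut.mul_apply, artin_apply]
  rcases eq_or_ne j i with rfl | h
  · simp +arith [artinEnd_of, mul_assoc]
  rcases eq_or_ne j (i + 1) with rfl | h'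
  · simp +arith [artinEnd_of]
  rcases eq_or_ne j (i + 2) with rfl | h''
  · simp +arith [artinEnd_of]
  · simp +arith [artinEnd_of, h, h', h'']

theorem artinEnd_zero_map_succ_succ (x : FreeGroup ℕ) :
    artinEnd 0 (map Nat.succ (map Nat.succ x)) = map Nat.succ (map Nat.succ x) := by
  have : (artinEnd 0).comp ((map Nat.succ).comp (map Nat.succ)) =
      (map Nat.succ).comp (map Nat.succ) :=
    ext_hom _ _ fun j => by simp +arith [artinEnd_of]
  exact DFunLike.congr_fun this x

theorem commute_artin_zero_shift_shift (e : MulAut (FreeGroup ℕ)) :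
    Commute (artin 0) (shift (shift e)) := by
  refine MulEquiv.toMonoidHom_injective (ext_hom _ _ fun j => ?_)
  simp only [MulEquiv.coe_toMonoidHom, MulAut.mul_apply, artin_apply, shift_apply]
  rcases j with _ | _ | k
  · simp [artinEnd_of, shift_apply]
  · simp [artinEnd_of, shift_apply]
  · simp [shift_apply, artinEnd_of, artinEnd_zero_map_succ_succ]

theorem map_succ_mem_avoiding_zero (x : FreeGroup ℕ) : map Nat.succ x ∈ avoiding 0 := by
  have : (map Nat.succ).range ≤ avoiding 0 := by
    rw [range_map]
    exact Subgroup.closure_mono (Set.image_mono (by rintro _ ⟨k, rfl⟩; exact k.succ_ne_zero))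
  exact this ⟨x, rfl⟩

theorem head_toWord_shift (e : MulAut (FreeGroup ℕ)) {f : FreeGroup ℕ} {b : Bool}
    (hf : f.toWord.head? = some (0, b)) : (shift e f).toWord.head? = some (0, b) := by
  refine head_toWord_map (π := (shift e : FreeGroup ℕ →* FreeGroup ℕ)) (shift e).injective
    (shiftEnd_of_zero e) (fun i hi => ?_) hf
  obtain ⟨k, rfl⟩ := Nat.exists_eq_succ_of_ne_zero hi
  change shiftEnd e (of (k + 1)) ∈ avoiding 0
  rw [shiftEnd_of_succ]
  exact map_succ_mem_avoiding_zero _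

theorem head_toWord_artin_zero {f : FreeGroup ℕ} {b : Bool} (hf : f.toWord.head? = some (0, b)) :
    (artin 0 f).toWord.head? = some (0, true) := by
  -- `ρ` sends `x₀ ↦ x₁` and `avoiding 0` into `avoiding 1`, and `σ f = x₀ · (ρ f · x₀⁻¹)`.
  set ρ : MulAut (FreeGroup ℕ) := MulAut.conj (of 0)⁻¹ * artin 0
  have hρ_apply (x : FreeGroup ℕ) : ρ x = (of 0)⁻¹ * artin 0 x * of 0 := by
    simp [ρ]
  have h0 : of 0 ∈ avoiding 1 := of_mem_avoiding zero_ne_one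
  have hρ : (ρ f).toWord.head? = some (1, b) := by
    refine head_toWord_map (π := (ρ : FreeGroup ℕ →* FreeGroup ℕ)) ρ.injective ?_
      (fun i hi => ?_) hf
    · change ρ (of 0) = of 1
      rw [hρ_apply, artin_apply, artinEnd_of, if_pos rfl]
      group
    · change ρ (of i) ∈ avoiding 1
      rw [hρ_apply, artin_apply, artinEnd_of, if_neg hi]
      rcases eq_or_ne i 1 with rfl | hi1
      · simpa using h0
      · rw [if_neg hi1]
        exact mul_mem (mul_mem (inv_mem h0) (of_mem_avoiding hi1)) h0
  have hρ' := head_toWord_mul_avoiding hρ (inv_mem h0)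
  have hconj : artin 0 f = mk [(0, true)] * (ρ f * (of 0)⁻¹) := by
    rw [hρ_apply]
    change _ = of 0 * _
    group
  rw [hconj, toWord_mk_singleton_mul (by simp [hρ'])]
  rfl

/-- Larue's invariant of `σ₁`-positive braids in the Artin representation. -/
def IsPositive (p : MulAut (FreeGroup ℕ)) : Prop :=
  ∀ ⦃f : FreeGroup ℕ⦄ ⦃b : Bool⦄,
    f.toWord.head? = some (0, b) → (p f).toWord.head? = some (0, true)

theorem IsPositive.mul {p q : MulAut (FreeGroup ℕ)} (hp : IsPositive p) (hq : IsPositive q) :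
    IsPositive (p * q) :=
  fun _ _ hf => hp (hq hf)

theorem IsPositive.ne_one {p : MulAut (FreeGroup ℕ)} (hp : IsPositive p) : p ≠ 1 := by
  rintro rfl
  have h := hp (f := (of 0)⁻¹) (b := false) (by simp [toWord_inv, invRev])
  simp [toWord_inv, invRev] at h

theorem isPositive_shift_mul_artin_mul_shift (u v : MulAut (FreeGroup ℕ)) :
    IsPositive (shift u * artin 0 * shift v) :=
  fun _ _ hf => head_toWord_shift u (head_toWord_artin_zero (head_toWord_shift v hf))

def braidEval : FreeMagma Unit → MulAut (FreeGroup ℕ)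
  | .of _ => 1
  | .mul T T' => shiftConj shift (artin 0) (braidEval T) (braidEval T')

theorem braidEval_mul (T T' : FreeMagma Unit) :
    braidEval (T * T') = shiftConj shift (artin 0) (braidEval T) (braidEval T') :=
  rfl

theorem braidEval_eq_of_LDEquiv {T T' : FreeMagma Unit} (h : LDEquiv T T') :
    braidEval T = braidEval T' := by
  induction h with
  | ld a b c =>
    simp only [braidEval_mul]
    exact shiftConj_self_distrib (by rw [shift_artin]; exact artin_braid 0)
      commute_artin_zero_shift_shift _ _ _
  | refl => rfl
  | symm _ ih => exact ih.symm
  | trans _ _ ih₁ ih₂ => exact ih₁.trans ih₂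
  | mul_left _ _ ih => simp only [braidEval_mul, ih]
  | mul_right _ _ ih => simp only [braidEval_mul, ih]

theorem exists_isPositive_of_LDDiv {T T' : FreeMagma Unit} (h : LDDiv T T') :
    ∃ p, IsPositive p ∧ braidEval T' = braidEval T * p := by
  obtain ⟨T₁, hT₁⟩ := h
  refine ⟨_, isPositive_shift_mul_artin_mul_shift (braidEval T₁) (braidEval T)⁻¹, ?_⟩
  rw [← braidEval_eq_of_LDEquiv hT₁, braidEval_mul, shiftConj, _root_.map_inv]
  group

theorem exists_isPositive_of_transGen {T T' : FreeMagma Unit} (h : Relation.TransGen LDDiv T T') :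
    ∃ p, IsPositive p ∧ braidEval T' = braidEval T * p := by
  induction h with
  | single h => exact exists_isPositive_of_LDDiv h
  | tail _ h ih =>
    obtain ⟨p, hp, hTp⟩ := ih
    obtain ⟨q, hq, hpq⟩ := exists_isPositive_of_LDDiv h
    exact ⟨p * q, hp.mul hq, by rw [hpq, hTp, mul_assoc]⟩

end Artin

theorem exclusion_and_free_shelf_acyclic :
    (∀ T T' : FreeMagma Unit, ¬ (LDEquiv T T' ∧ Relation.TransGen LDDiv T T')) ∧
    (∀ T : FreeMagma Unit, ¬ Relation.TransGen LDDiv T T) := by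
  have exclusion (T T' : FreeMagma Unit) : ¬ (LDEquiv T T' ∧ Relation.TransGen LDDiv T T') := by
    rintro ⟨hequiv, hdiv⟩
    obtain ⟨p, hp, heval⟩ := Artin.exists_isPositive_of_transGen hdiv
    rw [← Artin.braidEval_eq_of_LDEquiv hequiv, left_eq_mul] at heval
    exact hp.ne_one heval
  exact ⟨exclusion, fun T h => exclusion T T ⟨.refl T, h⟩⟩
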